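/- Let q be a prime and for each ν ≥ 0 set A(ν) = ∑_{t ∈ ℤ, t² < 4q^ν} H(4q^ν − t²) U_{k−2}(t/(2 q^{ν/2})), where k ≥ 4 is even and U denotes Chebyshev polynomials of the second kind. If the power series ∑_ν A(ν) q^{−ν/2} X^ν extends to a holomorphic function on |X| < 1, then for every ε > 0, |A(ν)| = O_ε(q^{ν(1/2 + ε)}). -/

import Mathlib

open scoped BigOperators

noncomputable section

/-- Positive definite integral binary quadratic forms of discriminant `−D`. -/
def IsPosDefQF (D : ℕ) (g : ℤ → ℤ → ℤ) : Prop :=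
  ∃ a b c : ℤ, 0 < a ∧ b ^ 2 - 4 * a * c = -(D : ℤ) ∧
    ∀ x y : ℤ, g x y = a * x ^ 2 + b * x * y + c * y ^ 2

/-- Action of `SL₂(ℤ)` on binary quadratic forms by linear change of variables. -/
def qfAct (γ : Matrix.SpecialLinearGroup (Fin 2) ℤ) (g : ℤ → ℤ → ℤ) : ℤ → ℤ → ℤ :=
  fun x y => g (γ.1 0 0 * x + γ.1 0 1 * y) (γ.1 1 0 * x + γ.1 1 1 * y)

/-- Equivalence of positive definite forms of discriminant `−D` under `SL₂(ℤ)`. -/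
def QFEquiv (D : ℕ) (g₁ g₂ : {g : ℤ → ℤ → ℤ // IsPosDefQF D g}) : Prop :=
  ∃ γ : Matrix.SpecialLinearGroup (Fin 2) ℤ, qfAct γ g₁.1 = g₂.1

/-- Cardinality of the stabilizer of a form in `SL₂(ℤ)`; the stabilizer in `PSL₂(ℤ)`
has half this cardinality since `−1` acts trivially. -/
def qfStabCard (g : ℤ → ℤ → ℤ) : ℕ :=
  Set.ncard {γ : Matrix.SpecialLinearGroup (Fin 2) ℤ | qfAct γ g = g}

/-- The Hurwitz class number `H(D) = ∑_Q 1/#Γ_Q`, the sum ranging over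
`PSL₂(ℤ)`-classes of positive definite integral binary quadratic forms of
discriminant `−D`, with `Γ_Q` the stabilizer of `Q` in `PSL₂(ℤ)`
(of cardinality `qfStabCard/2`). -/
def hurwitzH (D : ℕ) : ℚ :=
  ∑ᶠ c : Quot (QFEquiv D), 2 / (qfStabCard (Quot.out c).1 : ℚ)

end

open Metric

/-!
Since `G` is holomorphic on the unit disc, its Taylor series at `0`, which is
`∑ A(ν) q^{-ν/2} X^ν`, has radius of convergence at least `1`. Hence its coefficients are
`O(R^{-ν})` for every `R < 1`, and `R = q^{-ε}` gives `|A(ν)| = O(q^{ν/2} q^{εν})`.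
-/

open NNReal ENNReal FormalMultilinearSeries

lemma hasFPowerSeriesOnBall_ofScalars_of_hasSum {c : ℕ → ℂ} {G : ℂ → ℂ} {r : ℝ} (hr : 0 < r)
    (hser : ∀ X ∈ ball (0 : ℂ) r, HasSum (fun n => c n * X ^ n) (G X)) :
    HasFPowerSeriesOnBall G (ofScalars ℂ c) 0 (ENNReal.ofReal r) where
  r_le := by
    refine ENNReal.le_of_forall_nnreal_lt fun ρ hρ =>
      (ofScalars ℂ c).le_radius_of_tendsto (l := 0) ?_
    have hρr : (ρ : ℝ) < r := by simpa using ENNReal.coe_lt_ofReal.mp hρ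
    have hρ_mem : ((ρ : ℝ) : ℂ) ∈ ball (0 : ℂ) r := by simpa using hρr
    simpa [ofScalars_norm] using (hser _ hρ_mem).summable.tendsto_atTop_zero.norm
  r_pos := ENNReal.ofReal_pos.mpr hr
  hasSum {y} hy := by
    have hy' : y ∈ ball (0 : ℂ) r := by simpa [← Metric.eball_ofReal] using hy
    simpa [ofScalars_apply_eq, mul_comm] using hser y hy'

lemma le_radius_of_differentiableOn_ball {E : Type*} [NormedAddCommGroup E] [NormedSpace ℂ E]
    [CompleteSpace E] {G : ℂ → E} {p : FormalMultilinearSeries ℂ ℂ E} {z : ℂ}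
    (hp : HasFPowerSeriesAt G p z) {R : ℝ≥0} (hG : DifferentiableOn ℂ G (ball z R)) :
    (R : ℝ≥0∞) ≤ p.radius := by
  refine ENNReal.le_of_forall_pos_nnreal_lt fun ρ hρ hρR => ?_
  have hcauchy :=
    (hG.mono (closedBall_subset_ball (by exact_mod_cast hρR))).hasFPowerSeriesOnBall hρ
  exact hp.eq_formalMultilinearSeries hcauchy.hasFPowerSeriesAt ▸ hcauchy.r_le

lemma exists_norm_mul_pow_le_of_hasSum_of_differentiableOn {c : ℕ → ℂ} {G : ℂ → ℂ} {r : ℝ}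
    (hr : 0 < r) (hser : ∀ X ∈ ball (0 : ℂ) r, HasSum (fun n => c n * X ^ n) (G X))
    {R : ℝ≥0} (hG : DifferentiableOn ℂ G (ball 0 R)) {a : ℝ} (ha₀ : 0 ≤ a) (haR : a < R) :
    ∃ C : ℝ, 0 < C ∧ ∀ n, ‖c n‖ * a ^ n ≤ C := by
  lift a to ℝ≥0 using ha₀
  have hradius : (a : ℝ≥0∞) < (ofScalars ℂ c).radius :=
    (ENNReal.coe_lt_coe.mpr haR).trans_le <| le_radius_of_differentiableOn_ball
      (hasFPowerSeriesOnBall_ofScalars_of_hasSum hr hser).hasFPowerSeriesAt hG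
  simpa [ofScalars_norm] using (ofScalars ℂ c).norm_mul_pow_le_of_lt_radius hradius

theorem esti_general (q : ℕ) (hq : q.Prime)
    (A : ℕ → ℝ)
    (G : ℂ → ℂ) (hG : DifferentiableOn ℂ G (ball (0 : ℂ) 1))
    (r : ℝ) (hr : 0 < r)
    (hser : ∀ X : ℂ, X ∈ ball (0 : ℂ) r →
      HasSum (fun ν : ℕ => ((A ν / Real.sqrt ((q : ℝ) ^ ν) : ℝ) : ℂ) * X ^ ν) (G X)) :
    ∀ ε : ℝ, 0 < ε → ∃ C : ℝ, 0 < C ∧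
      ∀ ν : ℕ, |A ν| ≤ C * (q : ℝ) ^ ((ν : ℝ) * (1 / 2 + ε)) := by
  intro ε hε
  have hq1 : (1 : ℝ) < q := by exact_mod_cast hq.one_lt
  have hq0 : (0 : ℝ) < q := zero_lt_one.trans hq1
  obtain ⟨C, hC, hbound⟩ := exists_norm_mul_pow_le_of_hasSum_of_differentiableOn hr hser
    (R := 1) (by simpa using hG) (Real.rpow_nonneg hq0.le (-ε))
    (by simpa using Real.rpow_lt_one_of_one_lt_of_neg hq1 (neg_neg_of_pos hε))
  refine ⟨C, hC, fun ν => ?_⟩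
  have hsqrt : Real.sqrt ((q : ℝ) ^ ν) = (q : ℝ) ^ ((ν : ℝ) * (1 / 2)) := by
    rw [Real.sqrt_eq_rpow, ← Real.rpow_natCast, ← Real.rpow_mul hq0.le]
  have hsplit : |A ν| = ‖((A ν / Real.sqrt ((q : ℝ) ^ ν) : ℝ) : ℂ)‖ * ((q : ℝ) ^ (-ε)) ^ ν *
      (q : ℝ) ^ ((ν : ℝ) * (1 / 2 + ε)) := by
    rw [Complex.norm_real, Real.norm_eq_abs, abs_div, hsqrt,
      abs_of_pos (Real.rpow_pos_of_pos hq0 _), ← Real.rpow_natCast, ← Real.rpow_mul hq0.le,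
      mul_assoc, ← Real.rpow_add hq0, show -ε * ν + ν * (1 / 2 + ε) = (ν : ℝ) * (1 / 2) by ring,
      div_mul_cancel₀ _ (Real.rpow_pos_of_pos hq0 _).ne']
  rw [hsplit]
  gcongr
  exact hbound ν

/-- Corollary (esti): with `A(ν) = ∑_{t²<4q^ν} H(4q^ν−t²) U_{k−2}(t/(2q^{ν/2}))` for a prime
`q` and even `k ≥ 4`, if `∑_ν A(ν) q^{−ν/2} X^ν` extends holomorphically to `|X| < 1`, then
`|A(ν)| = O_ε(q^{ν(1/2+ε)})` for every `ε > 0`. -/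
theorem esti (q k : ℕ) (hq : q.Prime) (hk : 4 ≤ k) (hkeven : Even k)
    (A : ℕ → ℝ)
    (hA : ∀ ν : ℕ, A ν =
      ∑ᶠ (t : ℤ) (_ : t ^ 2 < 4 * (q : ℤ) ^ ν),
        (hurwitzH (4 * (q : ℤ) ^ ν - t ^ 2).toNat : ℝ) *
          (Polynomial.Chebyshev.U ℝ ((k : ℤ) - 2)).eval
            ((t : ℝ) / (2 * Real.sqrt ((q : ℝ) ^ ν))))
    (G : ℂ → ℂ) (hG : DifferentiableOn ℂ G (ball (0 : ℂ) 1))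
    (r : ℝ) (hr : 0 < r)
    (hser : ∀ X : ℂ, X ∈ ball (0 : ℂ) r →
      HasSum (fun ν : ℕ => ((A ν / Real.sqrt ((q : ℝ) ^ ν) : ℝ) : ℂ) * X ^ ν) (G X)) :
    ∀ ε : ℝ, 0 < ε → ∃ C : ℝ, 0 < C ∧
      ∀ ν : ℕ, |A ν| ≤ C * (q : ℝ) ^ ((ν : ℝ) * (1 / 2 + ε)) :=
  esti_general q hq A G hG r hr hser
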